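/- arXiv:1308.3985 — 2 statements merged into one kernel-verified Lean document; each statement's English description precedes it below -/
import Mathlib

section
/- Let L = ℤB₁ ⊕ ⋯ ⊕ ℤB_k ⊆ M_n(ℂ) be a matrix lattice of rank k, and fix real numbers r > 0 and n ≥ 1. Then the total power of the scaled code ρ^{1/2 − rn/k}·L(ρ^{rn/k}) satisfies lim_{ρ→∞} log(Σ_{X ∈ L(ρ^{rn/k})} ρ^{1 − 2rn/k}·‖X‖_F²) / log ρ = 1 + rn. -/
open Filter

/-- The Frobenius norm of a complex matrix. -/
noncomputable def frobNorm {n : ℕ} (X : Matrix (Fin n) (Fin n) ℂ) : ℝ :=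
  Real.sqrt (∑ i, ∑ j, Complex.normSq (X i j))

/-- The matrix lattice `L = ℤB₁ ⊕ ⋯ ⊕ ℤB_k` generated by the matrices `B i`. -/
def latticeOf {α : Type*} [AddCommGroup α] {k : ℕ} (B : Fin k → α) : Set α :=
  {X | ∃ z : Fin k → ℤ, X = ∑ i, z i • B i}

/-- `L(M)`: the nonzero lattice points of Frobenius norm at most `M`. -/
def latticeBall {n k : ℕ} (B : Fin k → Matrix (Fin n) (Fin n) ℂ) (M : ℝ) :
    Set (Matrix (Fin n) (Fin n) ℂ) :=
  {X | X ∈ latticeOf B ∧ frobNorm X ≤ M ∧ X ≠ 0}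

/-! By linear independence, `‖∑ zᵢ Bᵢ‖` is comparable to the sup norm of `z ∈ ℤᵏ`, so
`L(M)` lies in an integer box of side `≍ M`, while a box `[N, 2N]ᵏ` with `N ≍ M` lies in it.
Hence `L(M)` has `≍ Mᵏ` points, a positive proportion of them of norm `≍ M`, and
`S(M) := Σ_{X ∈ L(M)} ‖X‖_F² ≍ M^(k+2)`. With `M = ρ^(rn/k)` the total power is
`ρ^(1-2rn/k) S(ρ^(rn/k)) ≍ ρ^(1 + rn)`, and any `f ≍ x^p` satisfies `log f(x) / log x → p`. -/

open Topology Asymptotics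

theorem Asymptotics.IsTheta.tendsto_log_div_log {f : ℝ → ℝ} {p : ℝ}
    (h : f =Θ[atTop] fun x => x ^ p) :
    Tendsto (fun x => Real.log (f x) / Real.log x) atTop (𝓝 p) := by
  obtain ⟨c₂, hc₂, hf⟩ := h.isBigO.exists_pos
  obtain ⟨c₁, hc₁, hg⟩ := h.isBigO_symm.exists_pos
  have hlim (c : ℝ) : Tendsto (fun x => (p * Real.log x + c) / Real.log x) atTop (𝓝 p) := by
    have := tendsto_const_nhds (x := p) |>.add (Real.tendsto_log_atTop.const_div_atTop c)
    rw [add_zero] at this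
    refine this.congr' ?_
    filter_upwards [eventually_gt_atTop 1] with x hx
    rw [add_div, mul_div_cancel_right₀ _ (Real.log_pos hx).ne']
  have hbounds : ∀ᶠ x in atTop, 1 < x ∧ p * Real.log x + -Real.log c₁ ≤ Real.log (f x) ∧
      Real.log (f x) ≤ p * Real.log x + Real.log c₂ := by
    filter_upwards [hf.bound, hg.bound, eventually_gt_atTop 1] with x hfx hgx hx
    have hxp : 0 < x ^ p := Real.rpow_pos_of_pos (by linarith) p
    rw [Real.norm_of_nonneg hxp.le] at hfx hgx
    have hfx0 : 0 < ‖f x‖ := pos_of_mul_pos_right (hxp.trans_le hgx) hc₁.le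
    have hlog : Real.log (f x) = Real.log ‖f x‖ := (Real.log_abs _).symm
    have hlo := Real.log_le_log hxp hgx
    have hhi := Real.log_le_log hfx0 hfx
    rw [Real.log_mul hc₁.ne' hfx0.ne', Real.log_rpow (by linarith)] at hlo
    rw [Real.log_mul hc₂.ne' hxp.ne', Real.log_rpow (by linarith)] at hhi
    exact ⟨hx, by linarith, by linarith⟩
  refine tendsto_of_tendsto_of_tendsto_of_le_of_le' (hlim (-Real.log c₁)) (hlim (Real.log c₂))
    ?_ ?_ <;>
    filter_upwards [hbounds] with x ⟨hx, hlo, hhi⟩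
  · exact div_le_div_of_nonneg_right hlo (Real.log_pos hx).le
  · exact div_le_div_of_nonneg_right hhi (Real.log_pos hx).le

theorem Asymptotics.IsTheta.rpow_mul_comp_rpow {f : ℝ → ℝ} {p : ℝ}
    (h : f =Θ[atTop] fun x => x ^ p) (a : ℝ) {b : ℝ} (hb : 0 < b) :
    (fun x => x ^ a * f (x ^ b)) =Θ[atTop] fun x => x ^ (a + b * p) := by
  have hfb : (fun x => f (x ^ b)) =Θ[atTop] fun x => (x ^ b) ^ p :=
    ⟨h.1.comp_tendsto (tendsto_rpow_atTop hb), h.2.comp_tendsto (tendsto_rpow_atTop hb)⟩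
  refine ((isTheta_refl _ _).mul hfb).trans_eventuallyEq ?_
  filter_upwards [eventually_gt_atTop 0] with x hx
  rw [← Real.rpow_mul hx.le, ← Real.rpow_add hx]

theorem Asymptotics.isTheta_of_le_of_le {α : Type*} {l : Filter α} {f g : α → ℝ} {c₁ c₂ : ℝ}
    (hc₁ : 0 < c₁) (hg : ∀ᶠ x in l, 0 ≤ g x) (hlo : ∀ᶠ x in l, c₁ * g x ≤ f x)
    (hhi : ∀ᶠ x in l, f x ≤ c₂ * g x) : f =Θ[l] g := by
  refine ⟨.of_bound c₂ ?_, .of_bound c₁⁻¹ ?_⟩ <;>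
    filter_upwards [hg, hlo, hhi] with x hgx hlox hhix
  · rw [Real.norm_of_nonneg hgx, Real.norm_of_nonneg (by nlinarith)]
    exact hhix
  · rw [Real.norm_of_nonneg hgx, Real.norm_of_nonneg (by nlinarith), inv_mul_eq_div,
      le_div_iff₀ hc₁, mul_comm]
    exact hlox

section IntegerLattice

variable {ι : Type*} [Fintype ι]

theorem card_Icc_const_int [DecidableEq ι] {a b : ℤ} (h : a ≤ b + 1) :
    ((Finset.Icc (fun _ : ι => a) (fun _ => b)).card : ℝ) =
      ((b + 1 - a : ℤ) : ℝ) ^ Fintype.card ι := by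
  rw [Pi.card_Icc, Finset.prod_const, Finset.card_univ, Nat.cast_pow, ← Int.card_Icc_of_le _ _ h,
    Int.cast_natCast]

theorem mem_Icc_floor_of_norm_le [DecidableEq ι] {z : ι → ℤ} {R : ℝ} (h : ‖z‖ ≤ R) :
    z ∈ Finset.Icc (fun _ => -⌊R⌋) (fun _ => ⌊R⌋) := by
  have hz (i : ι) : |(z i : ℝ)| ≤ R := by
    rw [← Int.norm_eq_abs]
    exact (norm_le_pi_norm z i).trans h
  simp only [Finset.mem_Icc, Pi.le_def, neg_le, Int.le_floor]
  refine ⟨fun i => ?_, fun i => ?_⟩ <;> push_cast <;> linarith [abs_le.mp (hz i)]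

theorem norm_mem_Icc_of_mem_Icc [DecidableEq ι] [Nonempty ι] {N : ℕ} {z : ι → ℤ}
    (hz : z ∈ Finset.Icc (fun _ => (N : ℤ)) (fun _ => 2 * N)) : N ≤ ‖z‖ ∧ ‖z‖ ≤ 2 * N := by
  simp only [Finset.mem_Icc, Pi.le_def] at hz
  have hzi (i : ι) : ‖z i‖ = z i := by
    rw [Int.norm_eq_abs, abs_of_nonneg (by exact_mod_cast (Int.natCast_nonneg N).trans (hz.1 i))]
  obtain ⟨i⟩ := ‹Nonempty ι›
  refine ⟨?_, pi_norm_le_iff_of_nonneg (by positivity) |>.mpr fun j => ?_⟩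
  · calc (N : ℝ) ≤ z i := by exact_mod_cast hz.1 i
      _ = ‖z i‖ := (hzi i).symm
      _ ≤ ‖z‖ := norm_le_pi_norm z i
  · rw [hzi]
    exact_mod_cast hz.2 j

variable {g : (ι → ℤ) → ℝ} {C : ℝ}

theorem setOf_ne_zero_le_subset_Icc [DecidableEq ι] (hC : 0 ≤ C) (hle : ∀ z, ‖z‖ ≤ C * g z)
    (M : ℝ) :
    {z | z ≠ 0 ∧ g z ≤ M} ⊆ ↑(Finset.Icc (fun _ : ι => -⌊C * M⌋) (fun _ => ⌊C * M⌋)) :=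
  fun z hz => mem_Icc_floor_of_norm_le <| (hle z).trans <| mul_le_mul_of_nonneg_left hz.2 hC

theorem finsum_sq_le_pow_of_norm_le_mul (hC : 0 < C) (hle : ∀ z, ‖z‖ ≤ C * g z) {M : ℝ}
    (hM : 1 ≤ C * M) :
    ∑ᶠ z ∈ {z | z ≠ 0 ∧ g z ≤ M}, g z ^ 2 ≤
      (3 * C) ^ Fintype.card ι * M ^ (Fintype.card ι + 2) := by
  classical
  have hsub := setOf_ne_zero_le_subset_Icc hC.le hle M
  have hs := (Finset.Icc _ _).finite_toSet.subset hsub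
  have hcard : ((Finset.Icc (fun _ : ι => -⌊C * M⌋) (fun _ => ⌊C * M⌋)).card : ℝ) ≤
      (3 * C * M) ^ Fintype.card ι := by
    have hfloor : (0 : ℤ) ≤ ⌊C * M⌋ := Int.floor_nonneg.mpr (by linarith)
    rw [card_Icc_const_int (by omega), Int.cast_sub, Int.cast_add, Int.cast_neg, Int.cast_one]
    have : (0 : ℝ) ≤ ⌊C * M⌋ := by exact_mod_cast hfloor
    gcongr
    · linarith
    · linarith [Int.floor_le (C * M)]
  rw [finsum_mem_eq_finite_toFinset_sum _ hs]
  calc ∑ z ∈ hs.toFinset, g z ^ 2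
      ≤ hs.toFinset.card * M ^ 2 := by
        rw [← nsmul_eq_mul]
        refine Finset.sum_le_card_nsmul _ _ _ fun z hz => ?_
        rw [Set.Finite.mem_toFinset] at hz
        have : 0 ≤ g z := nonneg_of_mul_nonneg_right ((norm_nonneg z).trans (hle z)) hC
        exact pow_le_pow_left₀ this hz.2 2
    _ ≤ (3 * C * M) ^ Fintype.card ι * M ^ 2 := by
        gcongr
        exact (Nat.cast_le.mpr (Finset.card_le_card (Set.Finite.toFinset_subset.mpr hsub))).trans
          hcard
    _ = (3 * C) ^ Fintype.card ι * M ^ (Fintype.card ι + 2) := by ring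

theorem pow_div_le_finsum_sq_of_norm_comparable [Nonempty ι] (hC : 0 < C) (hle : ∀ z, ‖z‖ ≤ C * g z)
    (hge : ∀ z, g z ≤ C * ‖z‖) {M : ℝ} (hM : 4 * C ≤ M) :
    M ^ (Fintype.card ι + 2) / ((4 * C) ^ (Fintype.card ι + 2) * C ^ 2) ≤
      ∑ᶠ z ∈ {z | z ≠ 0 ∧ g z ≤ M}, g z ^ 2 := by
  classical
  set d := Fintype.card ι
  set N := ⌊M / (2 * C)⌋₊
  have hNlo : M / (4 * C) ≤ N := by
    have h1 : 1 ≤ M / (4 * C) := by rwa [one_le_div (by positivity)]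
    have h2 : M / (2 * C) = 2 * (M / (4 * C)) := by field_simp; ring
    linarith [Nat.lt_floor_add_one (M / (2 * C))]
  have hNhi : 2 * C * N ≤ M := by
    have := Nat.floor_le (a := M / (2 * C)) (div_nonneg (by linarith) (by linarith))
    rwa [le_div_iff₀ (by positivity), mul_comm] at this
  have hN1 : (1 : ℝ) ≤ N := le_trans (by rwa [one_le_div (by positivity)]) hNlo
  -- The box `[N, 2N]^d` has about `(M / C)^d` points, all in the ball and of size about `M`.
  set box := Finset.Icc (fun _ : ι => (N : ℤ)) (fun _ => 2 * N)
  have hbox (z) (hz : z ∈ box) : (z ≠ 0 ∧ g z ≤ M) ∧ N / C ≤ g z := by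
    obtain ⟨hzlo, hzhi⟩ := norm_mem_Icc_of_mem_Icc hz
    refine ⟨⟨?_, ?_⟩, ?_⟩
    · rintro rfl
      rw [norm_zero] at hzlo
      linarith
    · nlinarith [hge z]
    · rw [div_le_iff₀ hC, mul_comm]
      exact hzlo.trans (hle z)
  have hs := (Finset.Icc _ _).finite_toSet.subset (setOf_ne_zero_le_subset_Icc hC.le hle M)
  rw [finsum_mem_eq_finite_toFinset_sum _ hs]
  calc M ^ (d + 2) / ((4 * C) ^ (d + 2) * C ^ 2)
      = (M / (4 * C)) ^ (d + 2) / C ^ 2 := by rw [div_pow, div_div]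
    _ ≤ (N : ℝ) ^ (d + 2) / C ^ 2 := by gcongr; exact div_nonneg (by linarith) (by linarith)
    _ = (N : ℝ) ^ d * (N / C) ^ 2 := by ring
    _ ≤ box.card * (N / C) ^ 2 := by
        rw [card_Icc_const_int (by omega)]
        gcongr
        push_cast
        linarith
    _ ≤ ∑ z ∈ box, g z ^ 2 := by
        rw [← nsmul_eq_mul]
        exact Finset.card_nsmul_le_sum _ _ _ fun z hz =>
          pow_le_pow_left₀ (div_nonneg N.cast_nonneg hC.le) (hbox z hz).2 2
    _ ≤ ∑ z ∈ hs.toFinset, g z ^ 2 :=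
        Finset.sum_le_sum_of_subset_of_nonneg
          (fun z hz => (Set.Finite.mem_toFinset hs).mpr (hbox z hz).1) fun _ _ _ => sq_nonneg _

theorem isTheta_finsum_sq_of_norm_comparable [Nonempty ι] (hC : 0 < C) (hle : ∀ z, ‖z‖ ≤ C * g z)
    (hge : ∀ z, g z ≤ C * ‖z‖) :
    (fun M => ∑ᶠ z ∈ {z | z ≠ 0 ∧ g z ≤ M}, g z ^ 2) =Θ[atTop]
      fun M => M ^ (Fintype.card ι + 2) := by
  refine isTheta_of_le_of_le (c₁ := ((4 * C) ^ (Fintype.card ι + 2) * C ^ 2)⁻¹)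
    (c₂ := (3 * C) ^ Fintype.card ι) (by positivity) ?_ ?_ ?_
  · filter_upwards [eventually_ge_atTop 0] with M hM using by positivity
  · filter_upwards [eventually_ge_atTop (4 * C)] with M hM
    rw [← div_eq_inv_mul]
    exact pow_div_le_finsum_sq_of_norm_comparable hC hle hge hM
  · filter_upwards [eventually_ge_atTop C⁻¹] with M hM
    exact finsum_sq_le_pow_of_norm_le_mul hC hle (by rwa [← inv_mul_le_iff₀ hC, mul_one])

end IntegerLattice

section NormedSpace

variable {E : Type*} [NormedAddCommGroup E] [NormedSpace ℝ E]

theorem LinearIndependent.exists_norm_comparable {ι : Type*} [Fintype ι] {B : ι → E}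
    (hB : LinearIndependent ℝ B) :
    ∃ C > 0, ∀ z : ι → ℤ, ‖z‖ ≤ C * ‖∑ i, z i • B i‖ ∧ ‖∑ i, z i • B i‖ ≤ C * ‖z‖ := by
  set T := Fintype.linearCombination ℝ B
  obtain ⟨K, hK, hanti⟩ := T.exists_antilipschitzWith
    (LinearMap.ker_eq_bot.mpr hB.fintypeLinearCombination_injective)
  set Tc := LinearMap.toContinuousLinearMap T
  refine ⟨max K ‖Tc‖, lt_max_of_lt_left (by exact_mod_cast hK), fun z => ?_⟩
  set c : ι → ℝ := fun i => z i
  have hc : ‖c‖ = ‖z‖ := rfl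
  have hTc : Tc c = ∑ i, z i • B i := by
    simp [Tc, T, c, Fintype.linearCombination_apply, Int.cast_smul_eq_zsmul]
  rw [← hc, ← hTc]
  exact ⟨(Tc.bound_of_antilipschitz hanti c).trans (by gcongr; exact le_max_left _ _),
    (Tc.le_opNorm c).trans (by gcongr; exact le_max_right _ _)⟩

theorem LinearIndependent.isTheta_finsum_norm_sq_latticeOf {k : ℕ} [NeZero k] {B : Fin k → E}
    (hB : LinearIndependent ℝ B) :
    (fun M => ∑ᶠ X ∈ {X | X ∈ latticeOf B ∧ ‖X‖ ≤ M ∧ X ≠ 0}, ‖X‖ ^ 2) =Θ[atTop]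
      fun M => M ^ (k + 2) := by
  obtain ⟨C, hC, hcomp⟩ := hB.exists_norm_comparable
  set φ := Fintype.linearCombination ℤ B
  have hφ (z : Fin k → ℤ) : φ z = ∑ i, z i • B i := Fintype.linearCombination_apply ℤ B z
  have hφinj : Function.Injective φ := by
    refine (injective_iff_map_eq_zero φ).mpr fun z hz => norm_le_zero_iff.mp ?_
    simpa [← hφ, hz] using (hcomp z).1
  have hball (M : ℝ) : {X | X ∈ latticeOf B ∧ ‖X‖ ≤ M ∧ X ≠ 0} =
      φ '' {z | z ≠ 0 ∧ ‖φ z‖ ≤ M} := by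
    ext X
    simp only [latticeOf, Set.mem_ofPred_eq, Set.mem_image, ← hφ]
    constructor
    · rintro ⟨⟨z, rfl⟩, hM, h0⟩
      exact ⟨z, ⟨fun hz => h0 (by rw [hz, map_zero]), hM⟩, rfl⟩
    · rintro ⟨z, ⟨hz, hM⟩, rfl⟩
      exact ⟨⟨z, rfl⟩, hM, (map_ne_zero_iff φ hφinj).mpr hz⟩
  simp_rw [hball, finsum_mem_image hφinj.injOn]
  have := isTheta_finsum_sq_of_norm_comparable (g := fun z => ‖φ z‖) hC
    (fun z => by simpa [hφ] using (hcomp z).1) (fun z => by simpa [hφ] using (hcomp z).2)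
  rwa [Fintype.card_fin] at this

end NormedSpace

section Frobenius

attribute [local instance] Matrix.frobeniusNormedAddCommGroup Matrix.frobeniusNormedSpace

theorem frobNorm_eq_norm {n : ℕ} (X : Matrix (Fin n) (Fin n) ℂ) : frobNorm X = ‖X‖ := by
  simp [frobNorm, Matrix.frobenius_norm_def, Real.sqrt_eq_rpow, Complex.normSq_eq_norm_sq]

theorem LinearIndependent.isTheta_finsum_frobNorm_sq_latticeBall {n k : ℕ} [NeZero k]
    {B : Fin k → Matrix (Fin n) (Fin n) ℂ} (hB : LinearIndependent ℝ B) :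
    (fun M => ∑ᶠ X ∈ latticeBall B M, frobNorm X ^ 2) =Θ[atTop] fun M => M ^ (k + 2) := by
  simpa only [latticeBall, frobNorm_eq_norm] using hB.isTheta_finsum_norm_sq_latticeOf

end Frobenius

/-- The total power of the scaled code `ρ^(1/2 - rn/k)·L(ρ^(rn/k))` satisfies
`lim_{ρ→∞} log(Σ_{X ∈ L(ρ^(rn/k))} ρ^(1-2rn/k)·‖X‖_F²) / log ρ = 1 + rn`. -/
theorem scaled_code_power (n k : ℕ) (hn : 1 ≤ n) (hk : 0 < k)
    (B : Fin k → Matrix (Fin n) (Fin n) ℂ) (hB : LinearIndependent ℝ B)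
    (r : ℝ) (hr : 0 < r) :
    Tendsto
      (fun ρ : ℝ =>
        Real.log (∑ᶠ X ∈ latticeBall B (ρ ^ (r * (n : ℝ) / (k : ℝ))),
            ρ ^ (1 - 2 * r * (n : ℝ) / (k : ℝ)) * frobNorm X ^ 2) /
          Real.log ρ)
      atTop (nhds (1 + r * (n : ℝ))) := by
  have : NeZero k := ⟨hk.ne'⟩
  have hn' : (0 : ℝ) < n := by exact_mod_cast hn
  have hS : (fun M => ∑ᶠ X ∈ latticeBall B M, frobNorm X ^ 2) =Θ[atTop]
      fun M => M ^ ((k : ℝ) + 2) := by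
    convert hB.isTheta_finsum_frobNorm_sq_latticeBall using 2 with M
    exact_mod_cast Real.rpow_natCast M (k + 2)
  have hexp : 1 - 2 * r * (n : ℝ) / (k : ℝ) + r * (n : ℝ) / (k : ℝ) * (k + 2) = 1 + r * n := by
    field_simp
    ring
  rw [← hexp]
  simpa only [mul_finsum_mem] using
    (hS.rpow_mul_comp_rpow (1 - 2 * r * (n : ℝ) / (k : ℝ))
      (by positivity : 0 < r * (n : ℝ) / (k : ℝ))).tendsto_log_div_log
end

section
/- Let θ = (1 + √5)/2, θ̄ = (1 − √5)/2, α = 1 + i(1 − θ), ᾱ = 1 + i(1 − θ̄). For a, b, c, d ∈ ℤ[i], let X(a,b,c,d) = (1/√5)·[[α(a + bθ), α(c + dθ)], [i·ᾱ(c + dθ̄), ᾱ(a + bθ̄)]] ∈ M_2(ℂ). Then for all (a, b, c, d) ≠ (0, 0, 0, 0), |det X(a,b,c,d)| ≥ 1/√5; that is, the Golden code lattice L_gold = {X(a,b,c,d) : a, b, c, d ∈ ℤ[i]}, an 8-dimensional matrix lattice in M_2(ℂ), satisfies the non-vanishing determinant property. -/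
/-- A complex number is a Gaussian integer if it is of the form `p + q·i`
with `p, q ∈ ℤ`. -/
def IsGaussianInt (a : ℂ) : Prop :=
  ∃ p q : ℤ, a = (p : ℂ) + (q : ℂ) * Complex.I

/-- The golden ratio `θ = (1 + √5)/2`. -/
noncomputable def goldenθ : ℝ := (1 + Real.sqrt 5) / 2

/-- Its conjugate `θ̄ = (1 - √5)/2`. -/
noncomputable def goldenθbar : ℝ := (1 - Real.sqrt 5) / 2

/-- `α = 1 + i(1 - θ)`. -/
noncomputable def goldenα : ℂ := 1 + Complex.I * (1 - (goldenθ : ℂ))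

/-- `ᾱ = 1 + i(1 - θ̄)`. -/
noncomputable def goldenαbar : ℂ := 1 + Complex.I * (1 - (goldenθbar : ℂ))

/-- The Golden code codeword
`X(a,b,c,d) = (1/√5)·[[α(a+bθ), α(c+dθ)], [i·ᾱ(c+dθ̄), ᾱ(a+bθ̄)]]`. -/
noncomputable def goldenX (a b c d : ℂ) : Matrix (Fin 2) (Fin 2) ℂ :=
  ((Real.sqrt 5 : ℂ))⁻¹ •
    !![goldenα * (a + b * (goldenθ : ℂ)), goldenα * (c + d * (goldenθ : ℂ));
       Complex.I * goldenαbar * (c + d * (goldenθbar : ℂ)),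
       goldenαbar * (a + b * (goldenθbar : ℂ))]

/-- The Golden code lattice `L_gold = {X(a,b,c,d) : a, b, c, d ∈ ℤ[i]}`. -/
def Lgold : Set (Matrix (Fin 2) (Fin 2) ℂ) :=
  {X | ∃ a b c d : ℂ, IsGaussianInt a ∧ IsGaussianInt b ∧ IsGaussianInt c ∧
    IsGaussianInt d ∧ X = goldenX a b c d}

/-!
Since `αᾱ = 2 + i` and `(x + yθ)(x + yθ̄) = x² + xy - y²`, the determinant of `X(a,b,c,d)` is
`(2 + i)/5 · z` with `z = a² + ab - b² - i(c² + cd - d²) ∈ ℤ[i]`, so `|det X| ≥ |2 + i|/5 = 1/√5`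
unless `z = 0`. Multiplying `z = 0` by `4` gives `u² - i s² = 5(v² - i t²)` with `u = 2a + b`,
`s = 2c + d`, `v = b`, `t = d`. Modulo `5` this forces `5 ∣ u, s`, since `i` is not a square
modulo either prime factor `2 ± i` of `5`; then `(v, t, u/5, s/5)` is again a solution, and
infinite descent shows that all of `u, s, v, t` vanish.
-/

local notation "ℤ[i]" => GaussianInt

lemma goldenθ_add_goldenθbar : (goldenθ : ℂ) + goldenθbar = 1 := by
  exact_mod_cast Real.goldenRatio_add_goldenConj

lemma goldenθ_mul_goldenθbar : (goldenθ : ℂ) * goldenθbar = -1 := by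
  exact_mod_cast Real.goldenRatio_mul_goldenConj

open Complex in
lemma goldenα_mul_goldenαbar : goldenα * goldenαbar = 2 + I := by
  rw [goldenα, goldenαbar]
  linear_combination (-I - I ^ 2) * goldenθ_add_goldenθbar + I ^ 2 * goldenθ_mul_goldenθbar - I_sq

lemma add_mul_goldenθ_mul_add_mul_goldenθbar (x y : ℂ) :
    (x + y * goldenθ) * (x + y * goldenθbar) = x ^ 2 + x * y - y ^ 2 := by
  linear_combination x * y * goldenθ_add_goldenθbar + y ^ 2 * goldenθ_mul_goldenθbar

open Complex in
lemma det_goldenX (a b c d : ℂ) :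
    (goldenX a b c d).det = (2 + I) / 5 * (a ^ 2 + a * b - b ^ 2 - I * (c ^ 2 + c * d - d ^ 2)) := by
  have h5 : ((√5 : ℝ) : ℂ) ^ 2 = 5 := by norm_cast; simp
  rw [goldenX, Matrix.det_smul, Matrix.det_fin_two_of, Fintype.card_fin, inv_pow, h5,
    ← add_mul_goldenθ_mul_add_mul_goldenθbar, ← add_mul_goldenθ_mul_add_mul_goldenθbar,
    ← goldenα_mul_goldenαbar]
  ring

open Complex in
lemma norm_det_goldenX (a b c d : ℂ) :
    ‖(goldenX a b c d).det‖ = ‖a ^ 2 + a * b - b ^ 2 - I * (c ^ 2 + c * d - d ^ 2)‖ / √5 := by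
  have hnorm : ‖(2 + I : ℂ)‖ = √5 := by
    rw [Complex.norm_def, Complex.normSq_apply]
    norm_num
  rw [det_goldenX, norm_mul, norm_div, hnorm, Complex.norm_ofNat]
  field_simp
  rw [Real.sq_sqrt (by norm_num)]

lemma isGaussianInt_iff {a : ℂ} : IsGaussianInt a ↔ ∃ z : ℤ[i], (z : ℂ) = a := by
  constructor
  · rintro ⟨p, q, rfl⟩
    exact ⟨⟨p, q⟩, GaussianInt.toComplex_def' p q⟩
  · rintro ⟨z, rfl⟩
    exact ⟨z.re, z.im, GaussianInt.toComplex_def z⟩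

namespace GaussianInt

open Zsqrtd

lemma toComplex_sqrtd : ((sqrtd : ℤ[i]) : ℂ) = Complex.I := by
  simp [toComplex_def]

lemma re_sq_sub_sqrtd_mul_sq (u s : ℤ[i]) :
    (u ^ 2 - sqrtd * s ^ 2).re = u.re ^ 2 - u.im ^ 2 + 2 * s.re * s.im := by
  simp only [sq, re_sub, re_mul, im_mul, re_sqrtd, im_sqrtd]
  ring

lemma im_sq_sub_sqrtd_mul_sq (u s : ℤ[i]) :
    (u ^ 2 - sqrtd * s ^ 2).im = 2 * u.re * u.im - s.re ^ 2 + s.im ^ 2 := by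
  simp only [sq, im_sub, re_mul, im_mul, re_sqrtd, im_sqrtd]
  ring

/-- `i` is not a square modulo either prime factor `2 ± i` of `5`. -/
lemma five_dvd_of_five_dvd_sq_sub_sqrtd_mul_sq {u s : ℤ[i]}
    (h : (5 : ℤ[i]) ∣ u ^ 2 - sqrtd * s ^ 2) : 5 ∣ u ∧ 5 ∣ s := by
  have h5 : ((5 : ℤ) : ℤ[i]) = 5 := by norm_num
  simp only [← h5, intCast_dvd, re_sq_sub_sqrtd_mul_sq, im_sq_sub_sqrtd_mul_sq] at h ⊢
  have dvd_iff (x : ℤ) : 5 ∣ x ↔ (x : ZMod 5) = 0 := (ZMod.intCast_zmod_eq_zero_iff_dvd x 5).symm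
  simp only [dvd_iff, Int.cast_add, Int.cast_sub, Int.cast_mul, Int.cast_pow, Int.cast_ofNat] at h ⊢
  have key : ∀ a b c d : ZMod 5, a ^ 2 - b ^ 2 + 2 * c * d = 0 →
      2 * a * b - c ^ 2 + d ^ 2 = 0 → a = 0 ∧ b = 0 ∧ c = 0 ∧ d = 0 := by
    decide
  have := key _ _ _ _ h.1 h.2
  tauto

lemma exists_five_mul_of_sq_sub_sqrtd_mul_sq_eq_five_mul {u s v t : ℤ[i]}
    (h : u ^ 2 - sqrtd * s ^ 2 = 5 * (v ^ 2 - sqrtd * t ^ 2)) :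
    ∃ u' s' v' t' : ℤ[i], u = 5 * u' ∧ s = 5 * s' ∧ v = 5 * v' ∧ t = 5 * t' ∧
      u' ^ 2 - sqrtd * s' ^ 2 = 5 * (v' ^ 2 - sqrtd * t' ^ 2) := by
  obtain ⟨⟨u', rfl⟩, ⟨s', rfl⟩⟩ := five_dvd_of_five_dvd_sq_sub_sqrtd_mul_sq (h ▸ dvd_mul_right _ _)
  have h' : v ^ 2 - sqrtd * t ^ 2 = 5 * (u' ^ 2 - sqrtd * s' ^ 2) :=
    mul_left_cancel₀ (by norm_num : (5 : ℤ[i]) ≠ 0) (by linear_combination -h)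
  obtain ⟨⟨v', rfl⟩, ⟨t', rfl⟩⟩ := five_dvd_of_five_dvd_sq_sub_sqrtd_mul_sq (h' ▸ dvd_mul_right _ _)
  exact ⟨u', s', v', t', rfl, rfl, rfl, rfl,
    mul_left_cancel₀ (by norm_num : (25 : ℤ[i]) ≠ 0) (by linear_combination h)⟩

lemma five_pow_dvd_of_sq_sub_sqrtd_mul_sq_eq_five_mul (n : ℕ) {u s v t : ℤ[i]}
    (h : u ^ 2 - sqrtd * s ^ 2 = 5 * (v ^ 2 - sqrtd * t ^ 2)) :
    5 ^ n ∣ u ∧ 5 ^ n ∣ s ∧ 5 ^ n ∣ v ∧ 5 ^ n ∣ t := by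
  induction n generalizing u s v t with
  | zero => simp
  | succ n ih =>
    obtain ⟨u', s', v', t', rfl, rfl, rfl, rfl, h'⟩ :=
      exists_five_mul_of_sq_sub_sqrtd_mul_sq_eq_five_mul h
    simp only [pow_succ', mul_dvd_mul_iff_left (by norm_num : (5 : ℤ[i]) ≠ 0)]
    exact ih h'

lemma eq_zero_of_forall_five_pow_dvd {x : ℤ[i]} (h : ∀ n : ℕ, 5 ^ n ∣ x) : x = 0 := by
  by_contra hx
  have not_isUnit_five : ¬IsUnit (5 : ℤ[i]) := by
    rw [isUnit_iff_norm_isUnit]; decide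
  exact FiniteMultiplicity.not_iff_forall.2 h (.of_not_isUnit not_isUnit_five hx)

lemma eq_zero_of_sq_sub_sqrtd_mul_sq_eq_five_mul {u s v t : ℤ[i]}
    (h : u ^ 2 - sqrtd * s ^ 2 = 5 * (v ^ 2 - sqrtd * t ^ 2)) :
    u = 0 ∧ s = 0 ∧ v = 0 ∧ t = 0 := by
  have hdvd (n : ℕ) := five_pow_dvd_of_sq_sub_sqrtd_mul_sq_eq_five_mul n h
  exact ⟨eq_zero_of_forall_five_pow_dvd fun n ↦ (hdvd n).1,
    eq_zero_of_forall_five_pow_dvd fun n ↦ (hdvd n).2.1,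
    eq_zero_of_forall_five_pow_dvd fun n ↦ (hdvd n).2.2.1,
    eq_zero_of_forall_five_pow_dvd fun n ↦ (hdvd n).2.2.2⟩

lemma eq_zero_of_sq_add_mul_sub_sq_eq_sqrtd_mul {a b c d : ℤ[i]}
    (h : a ^ 2 + a * b - b ^ 2 = sqrtd * (c ^ 2 + c * d - d ^ 2)) :
    a = 0 ∧ b = 0 ∧ c = 0 ∧ d = 0 := by
  obtain ⟨hab, hcd, rfl, rfl⟩ := eq_zero_of_sq_sub_sqrtd_mul_sq_eq_five_mul
    (u := 2 * a + b) (s := 2 * c + d) (v := b) (t := d) (by linear_combination 4 * h)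
  simp_all

lemma one_le_norm_toComplex {z : ℤ[i]} (hz : z ≠ 0) : 1 ≤ ‖(z : ℂ)‖ := by
  rw [Complex.norm_def, Real.one_le_sqrt, ← intCast_real_norm]
  exact_mod_cast norm_pos.2 hz

end GaussianInt

lemma one_div_sqrt_five_le_norm_det_goldenX {a b c d : ℂ} (ha : IsGaussianInt a)
    (hb : IsGaussianInt b) (hc : IsGaussianInt c) (hd : IsGaussianInt d)
    (h : ¬(a = 0 ∧ b = 0 ∧ c = 0 ∧ d = 0)) :
    1 / √5 ≤ ‖(goldenX a b c d).det‖ := by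
  obtain ⟨a, rfl⟩ := isGaussianInt_iff.1 ha
  obtain ⟨b, rfl⟩ := isGaussianInt_iff.1 hb
  obtain ⟨c, rfl⟩ := isGaussianInt_iff.1 hc
  obtain ⟨d, rfl⟩ := isGaussianInt_iff.1 hd
  simp only [GaussianInt.toComplex_eq_zero] at h
  have hz : a ^ 2 + a * b - b ^ 2 - Zsqrtd.sqrtd * (c ^ 2 + c * d - d ^ 2) ≠ 0 := fun hz ↦
    h (GaussianInt.eq_zero_of_sq_add_mul_sub_sq_eq_sqrtd_mul (sub_eq_zero.1 hz))
  rw [norm_det_goldenX]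
  gcongr
  simpa [GaussianInt.toComplex_sqrtd] using GaussianInt.one_le_norm_toComplex hz

lemma one_div_sqrt_five_le_norm_det_of_mem_Lgold {X : Matrix (Fin 2) (Fin 2) ℂ} (hX : X ∈ Lgold)
    (hX0 : X ≠ 0) : 1 / √5 ≤ ‖X.det‖ := by
  obtain ⟨a, b, c, d, ha, hb, hc, hd, rfl⟩ := hX
  refine one_div_sqrt_five_le_norm_det_goldenX ha hb hc hd ?_
  rintro ⟨rfl, rfl, rfl, rfl⟩
  exact hX0 (by ext i j; fin_cases i <;> fin_cases j <;> simp [goldenX])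

lemma exists_mem_Lgold_ne_zero : ∃ X ∈ Lgold, X ≠ 0 := by
  have h0 : IsGaussianInt 0 := ⟨0, 0, by simp⟩
  have h1 : IsGaussianInt 1 := ⟨1, 0, by simp⟩
  refine ⟨goldenX 1 0 0 0, ⟨1, 0, 0, 0, h1, h0, h0, h0, rfl⟩, fun hX ↦ ?_⟩
  have := one_div_sqrt_five_le_norm_det_goldenX h1 h0 h0 h0 (by simp)
  rw [hX, Matrix.det_zero, norm_zero] at this
  exact (by positivity : (0 : ℝ) < 1 / √5).not_ge this

/-- Every nonzero Golden code codeword has `|det X| ≥ 1/√5`; in particular the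
Golden code lattice satisfies the non-vanishing determinant property. -/
theorem golden_code_NVD :
    (∀ a b c d : ℂ, IsGaussianInt a → IsGaussianInt b → IsGaussianInt c →
      IsGaussianInt d → ¬(a = 0 ∧ b = 0 ∧ c = 0 ∧ d = 0) →
      1 / Real.sqrt 5 ≤ ‖(goldenX a b c d).det‖) ∧
    0 < sInf ((fun X => ‖X.det‖) '' {X | X ∈ Lgold ∧ X ≠ 0}) := by
  refine ⟨fun _ _ _ _ ↦ one_div_sqrt_five_le_norm_det_goldenX, ?_⟩
  refine lt_of_lt_of_le (by positivity : (0 : ℝ) < 1 / √5) (le_csInf ?_ ?_)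
  · obtain ⟨X, hX, hX0⟩ := exists_mem_Lgold_ne_zero
    exact ⟨_, ⟨X, ⟨hX, hX0⟩, rfl⟩⟩
  · rintro _ ⟨X, ⟨hX, hX0⟩, rfl⟩
    exact one_div_sqrt_five_le_norm_det_of_mem_Lgold hX hX0
end
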